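/- Let U be an ultrafilter on I, let (X_i) be a uniformly bounded family of metric spaces, and for each i let ψ_i : X_i → [−B, B] be functions for a fixed bound B. Define ψ on the ultraproduct N = ∏_U X_i by ψ([(a_i)]) = lim_U ψ_i(a_i) (assuming the ψ_i share a common uniform continuity modulus so this is well defined). Then inf_{b ∈ N} ψ(b) = lim_U (inf_{b_i ∈ X_i} ψ_i(b_i)). -/

import Mathlib

/-- `L` is the ultralimit of `r` along `U`. -/
def IsUltralim {I : Type*} (U : Ultrafilter I) (r : I → ℝ) (L : ℝ) : Prop :=
  ∀ ε > 0, {i | |r i - L| < ε} ∈ U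

open Filter Topology Set

theorem isUltralim_iff_tendsto {I : Type*} (U : Ultrafilter I) (r : I → ℝ) (L : ℝ) :
    IsUltralim U r L ↔ Tendsto r U (𝓝 L) := by
  simp only [IsUltralim, Metric.tendsto_nhds, Real.dist_eq]
  rfl

section iInf

variable {ι : Type*} {X : ι → Type*} [∀ i, Nonempty (X i)] {l : Filter ι}
  {f : ∀ i, X i → ℝ} {Ψ : (∀ i, X i) → ℝ}

theorem eventually_iInf_lt_of_tendsto_apply (hf : ∀ i, BddBelow (range (f i)))
    (h : ∀ a, Tendsto (fun i => f i (a i)) l (𝓝 (Ψ a))) {t : ℝ} (ht : ⨅ a, Ψ a < t) :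
    ∀ᶠ i in l, ⨅ x, f i x < t := by
  obtain ⟨a, ha⟩ := exists_lt_of_ciInf_lt ht
  filter_upwards [(tendsto_order.1 (h a)).2 t ha] with i hi
  exact (ciInf_le (hf i) (a i)).trans_lt hi

-- Choose `a i` within `ε` of `⨅ x, f i x` in every coordinate at once; since `⨅ Ψ ≤ Ψ a`,
-- eventually `f i (a i) > t + ε`.
theorem eventually_lt_iInf_of_tendsto_apply (hΨ : BddBelow (range Ψ))
    (h : ∀ a, Tendsto (fun i => f i (a i)) l (𝓝 (Ψ a))) {t : ℝ} (ht : t < ⨅ a, Ψ a) :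
    ∀ᶠ i in l, t < ⨅ x, f i x := by
  set ε := ((⨅ a, Ψ a) - t) / 2 with hε
  have hεpos : 0 < ε := by linarith
  choose a ha using fun i => exists_lt_of_ciInf_lt (lt_add_of_pos_right (⨅ x, f i x) hεpos)
  have hΨa : ⨅ a, Ψ a ≤ Ψ a := ciInf_le hΨ a
  filter_upwards [(tendsto_order.1 (h a)).1 (t + ε) (by linarith)] with i hi
  linarith [ha i]

theorem tendsto_iInf_of_tendsto_apply (hf : ∀ i, BddBelow (range (f i)))
    (hΨ : BddBelow (range Ψ)) (h : ∀ a, Tendsto (fun i => f i (a i)) l (𝓝 (Ψ a))) :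
    Tendsto (fun i => ⨅ x, f i x) l (𝓝 (⨅ a, Ψ a)) :=
  tendsto_order.2 ⟨fun _ ht => eventually_lt_iInf_of_tendsto_apply hΨ h ht,
    fun _ ht => eventually_iInf_lt_of_tendsto_apply hf h ht⟩

end iInf

theorem stmt14_general {I : Type*} (U : Ultrafilter I) (X : I → Type*)
    [∀ i, Nonempty (X i)]
    (B : ℝ)
    (ψ : ∀ i, X i → ℝ) (hψb : ∀ (i : I) (a : X i), |ψ i a| ≤ B)
    (Ψ : (∀ i, X i) → ℝ)
    (hΨ : ∀ a : ∀ i, X i, IsUltralim U (fun i => ψ i (a i)) (Ψ a)) :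
    IsUltralim U (fun i => ⨅ b : X i, ψ i b) (⨅ a : ∀ i, X i, Ψ a) := by
  simp only [isUltralim_iff_tendsto] at hΨ ⊢
  have hlow : ∀ i (b : X i), -B ≤ ψ i b := fun i b => (abs_le.mp (hψb i b)).1
  have hψbdd : ∀ i, BddBelow (range (ψ i)) := fun i => ⟨-B, forall_mem_range.2 (hlow i)⟩
  have hΨbdd : BddBelow (range Ψ) :=
    ⟨-B, forall_mem_range.2 fun a => ge_of_tendsto' (hΨ a) fun i => hlow i (a i)⟩
  exact tendsto_iInf_of_tendsto_apply hψbdd hΨbdd hΨ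

/-- Łoś's theorem for the `inf` quantifier: if `ψ_i : X_i → [-B, B]` share a common uniform
continuity modulus and `Ψ` is the induced function on the metric ultraproduct (defined via
ultralimits on representatives), then `inf Ψ = lim_U (inf ψ_i)`. -/
theorem stmt14 {I : Type*} (U : Ultrafilter I) (X : I → Type*)
    [∀ i, MetricSpace (X i)] [∀ i, Nonempty (X i)]
    (B B' : ℝ) (hbd : ∀ (i : I) (a b : X i), dist a b ≤ B')
    (ψ : ∀ i, X i → ℝ) (hψb : ∀ (i : I) (a : X i), |ψ i a| ≤ B)
    (hmod : ∀ ε > 0, ∃ δ > 0, ∀ (i : I) (a b : X i), dist a b < δ → |ψ i a - ψ i b| ≤ ε)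
    (Ψ : (∀ i, X i) → ℝ)
    (hΨ : ∀ a : ∀ i, X i, IsUltralim U (fun i => ψ i (a i)) (Ψ a)) :
    IsUltralim U (fun i => ⨅ b : X i, ψ i b) (⨅ a : ∀ i, X i, Ψ a) :=
  stmt14_general U X B ψ hψb Ψ hΨ
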